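/- For all real parameters c ≥ 0 and k ≥ 0, there exists a threshold β̂ ∈ [0,1] such that f_{β̂}(x) ≥ f_β(x) for every β ∈ [0,1] and every x ∈ [0,1]. Consequently, for every Borel probability measure μ on [0,1] and every β ∈ [0,1], ∫ f_{β̂} dμ ≥ ∫ f_β dμ; in particular the optimal decision threshold β̂ can be chosen independently of the distribution of repayment probabilities. -/
import Mathlib


open MeasureTheory Set

/-- Expected one-step updated repayment probability of an approved individual
with current repayment probability `x`. -/
noncomputable def g (c k x : ℝ) : ℝ :=
  x * max (min (x + k) 1) 0 + (1 - x) * max (min (x - c * k) 1) 0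

/-- One-step update under a threshold-`β` loan policy. -/
noncomputable def f (c k β x : ℝ) : ℝ :=
  if x < β then x else g c k x

lemma gL1 (c k x : ℝ) (hc : 0 ≤ c) (hk : 0 ≤ k) (hx : 0 ≤ x)
    (h1 : x < 1 - k) (h2 : x < max (c*k) (c/(1+c))) : g c k x ≤ x := by
  have hc1 : (0:ℝ) < 1 + c := by linarith
  have e1 : max (min (x + k) 1) 0 = x + k := by
    rw [min_eq_left (by linarith), max_eq_left (by linarith)]
  have e2 : min (x - c*k) 1 = x - c*k := min_eq_left (by nlinarith)
  rcases le_total x (c*k) with h | h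
  · have e3 : max (x - c*k) 0 = 0 := max_eq_right (by linarith)
    simp only [g, e1, e2, e3]
    nlinarith
  · have e3 : max (x - c*k) 0 = x - c*k := max_eq_left (by linarith)
    have hlt : x < c/(1+c) := by
      rcases lt_or_ge x (c/(1+c)) with h' | h'
      · exact h'
      · exact absurd h2 (not_lt.mpr (max_le (by linarith) h'))
    have : x * (1+c) < c := by
      rw [lt_div_iff₀ hc1] at hlt; linarith
    simp only [g, e1, e2, e3]
    nlinarith

lemma gL2 (c k x : ℝ) (hc : 0 ≤ c) (hk : 0 ≤ k) (hx0 : 0 ≤ x) (hx1 : x < 1)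
    (hb : min (1-k) (max (c*k) (c/(1+c))) ≤ x) : x ≤ g c k x := by
  have hc1 : (0:ℝ) < 1 + c := by linarith
  rcases le_or_gt (1-k) x with h | h
  · -- x + k ≥ 1
    have e1' : max (min (x + k) 1) 0 = 1 := by
      rw [min_eq_right (by linarith), max_eq_left (by linarith)]
    have h2 : 0 ≤ max (min (x - c*k) 1) 0 := le_max_right _ _
    simp only [g, e1']
    nlinarith
  · have hM : max (c*k) (c/(1+c)) ≤ x := by
      rcases le_or_gt (max (c*k) (c/(1+c))) x with h' | h'
      · exact h'
      · have : min (1-k) (max (c*k) (c/(1+c))) = 1 - k ∨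
            min (1-k) (max (c*k) (c/(1+c))) = max (c*k) (c/(1+c)) := min_cases _ _ |>.imp (·.1) (·.1)
        rcases this with e | e <;> rw [e] at hb <;> linarith
    have hck : c*k ≤ x := le_trans (le_max_left _ _) hM
    have hcc : c/(1+c) ≤ x := le_trans (le_max_right _ _) hM
    have e1 : max (min (x + k) 1) 0 = x + k := by
      rw [min_eq_left (by linarith), max_eq_left (by linarith)]
    have hck0 : 0 ≤ c*k := mul_nonneg hc hk
    have e2 : max (min (x - c*k) 1) 0 = x - c*k := by
      rw [min_eq_left (by linarith), max_eq_left (by linarith)]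
    have : c ≤ x * (1+c) := by
      rw [div_le_iff₀ hc1] at hcc; linarith
    simp only [g, e1, e2]
    nlinarith

lemma f_meas (c k β : ℝ) : Measurable (f c k β) := by
  have hg : Measurable (g c k) := by
    unfold g; fun_prop
  unfold f
  exact Measurable.ite (measurableSet_lt measurable_id measurable_const) measurable_id hg

lemma f_bounds (c k β x : ℝ) (hc : 0 ≤ c) (hk : 0 ≤ k) (hx : x ∈ Icc (0:ℝ) 1) :
    f c k β x ∈ Icc (0:ℝ) 1 := by
  obtain ⟨hx0, hx1⟩ := hx
  have hg0 : 0 ≤ g c k x := by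
    unfold g
    have := le_max_right (min (x + k) 1) (0:ℝ)
    have := le_max_right (min (x - c*k) 1) (0:ℝ)
    nlinarith
  have hg1 : g c k x ≤ 1 := by
    unfold g
    have h1 : max (min (x + k) 1) 0 ≤ 1 := max_le (min_le_right _ _) (by norm_num)
    have h2 : max (min (x - c*k) 1) 0 ≤ 1 := max_le (min_le_right _ _) (by norm_num)
    nlinarith
  unfold f
  split <;> exact ⟨by assumption, by assumption⟩

theorem stmt_3 (c k : ℝ) (hc : 0 ≤ c) (hk : 0 ≤ k) :
    ∃ βhat ∈ Icc (0:ℝ) 1,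
      (∀ β ∈ Icc (0:ℝ) 1, ∀ x ∈ Icc (0:ℝ) 1, f c k β x ≤ f c k βhat x) ∧
      (∀ μ : Measure ℝ, IsProbabilityMeasure μ → μ (Icc (0:ℝ) 1) = 1 →
        ∀ β ∈ Icc (0:ℝ) 1, (∫ x, f c k β x ∂μ) ≤ ∫ x, f c k βhat x ∂μ) := by
  set m : ℝ := min (1-k) (max (c*k) (c/(1+c))) with hm
  set b : ℝ := max 0 m with hbdef
  have hc1 : (0:ℝ) < 1 + c := by linarith
  have hb0 : 0 ≤ b := le_max_left _ _
  have hb1 : b ≤ 1 := max_le (by norm_num) (le_trans (min_le_left _ _) (by linarith))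
  have hpt : ∀ β ∈ Icc (0:ℝ) 1, ∀ x ∈ Icc (0:ℝ) 1, f c k β x ≤ f c k b x := by
    intro β hβ x hx
    obtain ⟨hx0, hx1⟩ := hx
    unfold f
    split_ifs with h1 h2 h2
    · exact le_rfl
    · -- x < β, ¬ x < b : need x ≤ g x
      push_neg at h2
      have hmx : m ≤ x := le_trans (le_max_right _ _) h2
      exact gL2 c k x hc hk hx0 (lt_of_lt_of_le h1 hβ.2) hmx
    · -- ¬ x < β, x < b : need g x ≤ x
      have hxm : x < m := by
        rcases max_cases (0:ℝ) m with ⟨e, _⟩ | ⟨e, _⟩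
        · rw [hbdef, e] at h2; linarith
        · rw [hbdef, e] at h2; exact h2
      have h1' : x < 1 - k := lt_of_lt_of_le hxm (min_le_left _ _)
      have h2' : x < max (c*k) (c/(1+c)) := lt_of_lt_of_le hxm (min_le_right _ _)
      exact gL1 c k x hc hk hx0 h1' h2'
    · exact le_rfl
  refine ⟨b, ⟨hb0, hb1⟩, hpt, ?_⟩
  intro μ hprob hμ β hβ
  have hcompl : μ (Icc (0:ℝ) 1)ᶜ = 0 := by
    have := measure_compl (measurableSet_Icc (a := (0:ℝ)) (b := 1)) (measure_ne_top μ _)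
    rw [hμ, measure_univ] at this
    simp [this]
  have hae : ∀ᵐ x ∂μ, x ∈ Icc (0:ℝ) 1 := by
    rw [ae_iff]
    exact hcompl
  have hint : ∀ β', Integrable (f c k β') μ := by
    intro β'
    refine Integrable.mono' (integrable_const (1:ℝ)) (f_meas c k β').aestronglyMeasurable ?_
    filter_upwards [hae] with x hx
    have := f_bounds c k β' x hc hk hx
    rw [Real.norm_eq_abs, abs_le]
    exact ⟨by linarith [this.1], this.2⟩
  refine integral_mono_ae (hint β) (hint b) ?_
  filter_upwards [hae] with x hx
  exact hpt β hβ x hx
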